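/- For every total ordering v₀ < ⋯ < vₙ of variables and every basic formula α whose variables are among v₀,…,vₙ, either α is unsatisfiable in the structure 𝒯 of trees, or there exists a basic formula that is solved with respect to this ordering and is equivalent to α in the extended theory of trees; moreover, when the signature is finite, such a solved formula (or the answer 'unsatisfiable') is computable from α. -/

import Mathlib

set_option linter.unusedVariables false

/-- A many-sorted signature: sorts and generators (function symbols),
each generator `g` having argument sorts `src g` and target sort `tgt g`. -/
structure Sig where
  Srt : Type
  Gen : Type
  tgt : Gen → Srt
  src : Gen → List Srt

namespace Sig

variable (σ : Sig)

/-- The generators of a sort `s`. -/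
def Gens (s : σ.Srt) : Set σ.Gen := { g | σ.tgt g = s }

/-- A labeling of positions (lists of natural numbers) by generators is a valid
tree labeling if children exist exactly according to arity and have the right sorts. -/
def IsLabeling (L : List ℕ → Option σ.Gen) : Prop :=
  (∀ p, L p = none → ∀ i, L (p ++ [i]) = none) ∧
  (∀ p g, L p = some g → ∀ i, ((L (p ++ [i])).isSome ↔ i < (σ.src g).length)) ∧
  (∀ p g i g', L p = some g → L (p ++ [i]) = some g' →
      (σ.src g)[i]? = some (σ.tgt g'))

/-- A (possibly infinite) tree of sort `s`. -/
structure Tree (s : σ.Srt) where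
  L : List ℕ → Option σ.Gen
  isLab : σ.IsLabeling L
  root : ∃ g, L [] = some g ∧ σ.tgt g = s

variable {σ}

/-- A tree is finite if it has finitely many nodes. -/
def Tree.IsFinite {s : σ.Srt} (t : σ.Tree s) : Prop :=
  { p : List ℕ | (t.L p).isSome }.Finite

/-- The tree has depth at most `d`. -/
def Tree.DepthLE {s : σ.Srt} (t : σ.Tree s) (d : ℕ) : Prop :=
  ∀ p, (t.L p).isSome → p.length ≤ d

variable (σ)

/-- Build a tree with root labeled `g` from given immediate subtrees. -/
def build (g : σ.Gen) (c : ∀ i : Fin (σ.src g).length, σ.Tree ((σ.src g).get i)) :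
    σ.Tree (σ.tgt g) where
  L := fun p =>
    match p with
    | [] => some g
    | i :: q => if h : i < (σ.src g).length then (c ⟨i, h⟩).L q else none
  isLab := by
    refine ⟨?_, ?_, ?_⟩
    · intro p hp i
      match p with
      | [] => simp at hp
      | j :: q =>
        simp only [List.cons_append]
        by_cases h : j < (σ.src g).length
        · simp only [dif_pos h] at hp ⊢
          exact (c ⟨j, h⟩).isLab.1 q hp i
        · simp only [dif_neg h]
    · intro p g' hp i
      match p with
      | [] =>
        injection hp with hg
        subst hg
        by_cases h : i < (σ.src g).length
        · simp only [List.nil_append, dif_pos h]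
          obtain ⟨g₀, h₀, -⟩ := (c ⟨i, h⟩).root
          simp [h₀, h]
        · simp [List.nil_append, dif_neg h, h]
      | j :: q =>
        by_cases h : j < (σ.src g).length
        · simp only [dif_pos h] at hp
          simp only [List.cons_append, dif_pos h]
          exact (c ⟨j, h⟩).isLab.2.1 q g' hp i
        · simp only [dif_neg h] at hp
          exact nomatch hp
    · intro p g' i g'' hp hpi
      match p with
      | [] =>
        injection hp with hg
        subst hg
        by_cases h : i < (σ.src g).length
        · simp only [List.nil_append, dif_pos h] at hpi
          obtain ⟨g₀, h₀, htgt⟩ := (c ⟨i, h⟩).root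
          rw [h₀, Option.some.injEq] at hpi
          subst hpi
          rw [List.getElem?_eq_getElem h]
          exact congrArg some htgt.symm
        · simp only [List.nil_append, dif_neg h] at hpi
          exact nomatch hpi
      | j :: q =>
        by_cases h : j < (σ.src g).length
        · simp only [dif_pos h] at hp
          simp only [List.cons_append, dif_pos h] at hpi
          exact (c ⟨j, h⟩).isLab.2.2 q g' i g'' hp hpi
        · simp only [dif_neg h] at hp
          exact nomatch hp
  root := ⟨g, rfl, rfl⟩

/-- Sorts with no infinite trees. -/
def S0I : Set σ.Srt := { s | ∀ t : σ.Tree s, t.IsFinite }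
/-- Sorts with no finite trees. -/
def S0F : Set σ.Srt := { s | ∀ t : σ.Tree s, ¬ t.IsFinite }
/-- Sorts with only finitely many finite trees. -/
def SFF : Set σ.Srt := { s | { t : σ.Tree s | t.IsFinite }.Finite }
/-- Sorts with only finitely many infinite trees. -/
def SFI : Set σ.Srt := { s | { t : σ.Tree s | ¬ t.IsFinite }.Finite }
/-- Sorts with exactly one infinite tree. -/
def S1I : Set σ.Srt := { s | ∃! t : σ.Tree s, ¬ t.IsFinite }

/-- Terms of the (extended) first-order language of trees. Variables are
pairs of a sort and a number. -/
inductive Tm : σ.Srt → Type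
  | var (s : σ.Srt) (n : ℕ) : Tm s
  | app (g : σ.Gen) (args : ∀ i : Fin (σ.src g).length, Tm ((σ.src g).get i)) :
      Tm (σ.tgt g)

/-- Valuations assign trees to (sorted) variables. -/
def Val := ∀ s : σ.Srt, ℕ → σ.Tree s

variable {σ}

/-- Evaluation of a term in the structure of trees under a valuation. -/
def Tm.eval (ρ : σ.Val) : ∀ {s : σ.Srt}, σ.Tm s → σ.Tree s
  | _, .var s n => ρ s n
  | _, .app g args => σ.build g (fun i => (args i).eval ρ)

/-- The (sorted) free variables of a term. -/
def Tm.fv : ∀ {s : σ.Srt}, σ.Tm s → Set ((s : σ.Srt) × ℕ)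
  | _, .var s n => {⟨s, n⟩}
  | _, .app _ args => ⋃ i, (args i).fv

/-- A term is flat if it is a variable or a generator applied to variables. -/
def Tm.IsFlat : ∀ {s : σ.Srt}, σ.Tm s → Prop
  | _, .var _ _ => True
  | _, .app g args => ∀ i : Fin (σ.src g).length, ∃ n, args i = Tm.var ((σ.src g).get i) n

/-- A term of the form `f(z̄)`. -/
def Tm.IsApp : ∀ {s : σ.Srt}, σ.Tm s → Prop
  | _, .var _ _ => False
  | _, .app _ _ => True

open Classical in
/-- Update a valuation at one sorted variable. -/
noncomputable def updV (ρ : σ.Val) (s : σ.Srt) (n : ℕ) (t : σ.Tree s) : σ.Val :=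
  fun s' m =>
    if h : s' = s then
      (if m = n then cast (congrArg σ.Tree h.symm) t else ρ s' m)
    else ρ s' m

variable (σ)

/-- Formulae of the extended first-order language of trees: equality,
the finiteness predicates `fin`, propositional connectives and sorted quantifiers. -/
inductive Fml : Type
  | tru : Fml
  | fls : Fml
  | eq {s : σ.Srt} (a b : σ.Tm s) : Fml
  | fin {s : σ.Srt} (a : σ.Tm s) : Fml
  | not (φ : Fml) : Fml
  | and (φ ψ : Fml) : Fml
  | or (φ ψ : Fml) : Fml
  | imp (φ ψ : Fml) : Fml
  | ex (s : σ.Srt) (n : ℕ) (φ : Fml) : Fml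
  | all (s : σ.Srt) (n : ℕ) (φ : Fml) : Fml

variable {σ}

/-- Satisfaction of a formula in the structure `𝒯` of trees under a valuation. -/
def Fml.Sat (ρ : σ.Val) : σ.Fml → Prop
  | .tru => True
  | .fls => False
  | .eq a b => a.eval ρ = b.eval ρ
  | .fin a => (a.eval ρ).IsFinite
  | .not φ => ¬ φ.Sat ρ
  | .and φ ψ => φ.Sat ρ ∧ ψ.Sat ρ
  | .or φ ψ => φ.Sat ρ ∨ ψ.Sat ρ
  | .imp φ ψ => φ.Sat ρ → ψ.Sat ρ
  | .ex s n φ => ∃ t : σ.Tree s, φ.Sat (updV ρ s n t)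
  | .all s n φ => ∀ t : σ.Tree s, φ.Sat (updV ρ s n t)

/-- The free variables of a formula. -/
def Fml.fv : σ.Fml → Set ((s : σ.Srt) × ℕ)
  | .tru => ∅
  | .fls => ∅
  | .eq a b => a.fv ∪ b.fv
  | .fin a => a.fv
  | .not φ => φ.fv
  | .and φ ψ => φ.fv ∪ ψ.fv
  | .or φ ψ => φ.fv ∪ ψ.fv
  | .imp φ ψ => φ.fv ∪ ψ.fv
  | .ex s n φ => φ.fv \ {⟨s, n⟩}
  | .all s n φ => φ.fv \ {⟨s, n⟩}

/-- Two formulae are equivalent in the extended theory of trees if they are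
satisfied by exactly the same valuations. -/
def FmlEquiv (φ ψ : σ.Fml) : Prop := ∀ ρ : σ.Val, φ.Sat ρ ↔ ψ.Sat ρ

variable (σ)

/-- A basic formula: a conjunction of equations `v = t` (with `t` a flat term)
and finiteness constraints `fin(u)`, represented by the list of equations
(a sort, the left-hand-side variable, the right-hand-side term) and the list of
`fin`-variables. -/
structure Basic where
  eqs : List ((s : σ.Srt) × ℕ × σ.Tm s)
  fins : List ((s : σ.Srt) × ℕ)

variable {σ}

/-- Well-formedness of a basic formula: all right-hand sides are flat. -/
def Basic.WF (β : σ.Basic) : Prop := ∀ e ∈ β.eqs, (e.2.2).IsFlat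

/-- Satisfaction of a basic formula under a valuation. -/
def Basic.Sat (β : σ.Basic) (ρ : σ.Val) : Prop :=
  (∀ e ∈ β.eqs, ρ e.1 e.2.1 = (e.2.2).eval ρ) ∧
  (∀ u ∈ β.fins, (ρ u.1 u.2).IsFinite)

/-- The variables occurring in a basic formula. -/
def Basic.vars (β : σ.Basic) : Set ((s : σ.Srt) × ℕ) :=
  { x | (∃ e ∈ β.eqs, (⟨e.1, e.2.1⟩ : (s : σ.Srt) × ℕ) = x ∨ x ∈ (e.2.2).fv) ∨ x ∈ β.fins }

/-- One step of reachability: `y` occurs in the right-hand side of an equation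
whose left-hand side is `x`. -/
def Basic.step (β : σ.Basic) (x y : (s : σ.Srt) × ℕ) : Prop :=
  ∃ e ∈ β.eqs, (⟨e.1, e.2.1⟩ : (s : σ.Srt) × ℕ) = x ∧ y ∈ (e.2.2).fv

/-- `y` is reachable from `x` (by a chain of equations, possibly empty). -/
def Basic.Reach (β : σ.Basic) (x y : (s : σ.Srt) × ℕ) : Prop :=
  Relation.ReflTransGen β.step x y

/-- `y` is properly reachable from `x` (by a nonempty chain of equations). -/
def Basic.ProperReach (β : σ.Basic) (x y : (s : σ.Srt) × ℕ) : Prop :=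
  Relation.TransGen β.step x y

open Classical in
/-- The index of an element in a list (used to compare variables in a given ordering). -/
noncomputable def idx {A : Type*} (vs : List A) (x : A) : ℕ :=
  vs.findIdx fun y => decide (y = x)

/-- `x` is smaller than `y` in the variable ordering given by the list `vs`. -/
noncomputable def ltv {A : Type*} (vs : List A) (x y : A) : Prop :=
  idx vs x < idx vs y

/-- A basic formula is solved with respect to the variable ordering `vs`:
(1) the left-hand-side variables of equations and the `fin`-variables are
pairwise distinct and every equation `x = y` between variables has `x > y`;
(2) `fin(v)` occurs only if the sort of `v` has both finite and infinite trees. -/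
noncomputable def Solved (vs : List ((s : σ.Srt) × ℕ)) (β : σ.Basic) : Prop :=
  ((β.eqs.map fun e => (⟨e.1, e.2.1⟩ : (s : σ.Srt) × ℕ)) ++ β.fins).Nodup ∧
  (∀ e ∈ β.eqs, ∀ n : ℕ, e.2.2 = Sig.Tm.var e.1 n →
      ltv vs (⟨e.1, n⟩ : (s : σ.Srt) × ℕ) ⟨e.1, e.2.1⟩) ∧
  (∀ u ∈ β.fins, (∃ t : σ.Tree u.1, t.IsFinite) ∧ (∃ t : σ.Tree u.1, ¬ t.IsFinite))

/-- `ρ'` agrees with `ρ` outside the set `V` of variables. -/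
def AgreesOff (ρ ρ' : σ.Val) (V : Set ((s : σ.Srt) × ℕ)) : Prop :=
  ∀ (s : σ.Srt) (n : ℕ), (⟨s, n⟩ : (s : σ.Srt) × ℕ) ∉ V → ρ' s n = ρ s n

variable (σ)

/-- A normal formula of depth at most 2,
`¬(∃x̄. α ∧ ⋀ᵢ ¬(∃ȳᵢ. βᵢ))`, given by the bound variables `x̄`,
the basic formula `α` and the list of pairs `(ȳᵢ, βᵢ)`. -/
structure NF2 where
  xs : List ((s : σ.Srt) × ℕ)
  base : σ.Basic
  inner : List (List ((s : σ.Srt) × ℕ) × σ.Basic)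

variable {σ}

/-- Well-formedness of the basic subformulae of a normal formula of depth ≤ 2. -/
def NF2.WF (φ : σ.NF2) : Prop := φ.base.WF ∧ ∀ p ∈ φ.inner, (p.2).WF

/-- Satisfaction of the inner part `∃x̄. α ∧ ⋀ᵢ ¬(∃ȳᵢ. βᵢ)` of a normal formula
of depth ≤ 2 (this is the shape of a fully simplified formula). -/
def NF2.PosSat (φ : σ.NF2) (ρ : σ.Val) : Prop :=
  ∃ ρ₁ : σ.Val, AgreesOff ρ ρ₁ { x | x ∈ φ.xs } ∧ φ.base.Sat ρ₁ ∧
    ∀ p ∈ φ.inner, ¬ ∃ ρ₂ : σ.Val, AgreesOff ρ₁ ρ₂ { x | x ∈ p.1 } ∧ (p.2).Sat ρ₂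

/-- Satisfaction of a normal formula `¬(∃x̄. α ∧ ⋀ᵢ ¬(∃ȳᵢ. βᵢ))` of depth ≤ 2. -/
def NF2.Sat (φ : σ.NF2) (ρ : σ.Val) : Prop := ¬ φ.PosSat ρ

/-- The free variables of a normal formula of depth ≤ 2. -/
def NF2.fv (φ : σ.NF2) : Set ((s : σ.Srt) × ℕ) :=
  (φ.base.vars \ { x | x ∈ φ.xs }) ∪
    { x | ∃ p ∈ φ.inner, x ∈ (p.2).vars ∧ x ∉ φ.xs ∧ x ∉ p.1 }

/-- All variables occurring (bound or free) in a normal formula of depth ≤ 2. -/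
def NF2.allVars (φ : σ.NF2) : Set ((s : σ.Srt) × ℕ) :=
  φ.base.vars ∪ { x | x ∈ φ.xs } ∪ { x | ∃ p ∈ φ.inner, x ∈ p.1 ∨ x ∈ (p.2).vars }

open Classical in
/-- `β` with all conjuncts also occurring in `α` removed (written `β*`). -/
noncomputable def bstar (α β : σ.Basic) : σ.Basic where
  eqs := β.eqs.filter fun e => decide (e ∉ α.eqs)
  fins := β.fins.filter fun u => decide (u ∉ α.fins)

/-- `β` contains an equation `u = f(w̄)`. -/
def HasEqApp (β : σ.Basic) (u : (s : σ.Srt) × ℕ) : Prop :=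
  ∃ e ∈ β.eqs, (⟨e.1, e.2.1⟩ : (s : σ.Srt) × ℕ) = u ∧ (e.2.2).IsApp

/-- `α` contains an equation with left-hand side `u`. -/
def HasLhs (α : σ.Basic) (u : (s : σ.Srt) × ℕ) : Prop :=
  ∃ e ∈ α.eqs, (⟨e.1, e.2.1⟩ : (s : σ.Srt) × ℕ) = u

/-- Definition of an instantiable variable of a normal formula
`¬(∃x̄. α ∧ ⋀ᵢ ¬(∃ȳᵢ. βᵢ))` of depth at most 2 (Definition of the paper):
`u` is free or among `x̄` and one of the four conditions holds. -/
def NF2.Instantiable (φ : σ.NF2) (u : (s : σ.Srt) × ℕ) : Prop :=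
  (u ∈ φ.fv ∨ u ∈ φ.xs) ∧
  ( ((σ.Gens u.1).Finite ∧ ∃ p ∈ φ.inner,
        HasEqApp (bstar φ.base p.2) u ∧ ¬ (p.2).ProperReach u u)
  ∨ (u.1 ∈ σ.SFF ∩ σ.SFI ∧ (∃ p ∈ φ.inner, u ∈ (bstar φ.base p.2).vars) ∧
        ¬ HasLhs φ.base u)
  ∨ (u.1 ∈ σ.SFF ∧ u ∈ φ.base.fins ∧ ∃ p ∈ φ.inner, u ∈ (bstar φ.base p.2).vars)
  ∨ (u.1 ∈ σ.SFI ∧ ∃ p ∈ φ.inner,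
        (bstar φ.base p.2).eqs = [] ∧ u ∈ (bstar φ.base p.2).fins) )

/-- A normal formula of depth at most 2 is solved (conditions (1)–(5) of the paper):
its basic subformulae are solved with respect to an ordering compatible with binding
depth, the equations of `α` are included in each `βᵢ`, each `βᵢ` has a conjunct not
in `α`, no variable is instantiable, and all bound variables are reachable from
the free variables of the respective subformula. -/
noncomputable def NF2.IsSolved (φ : σ.NF2) : Prop :=
  (∃ vs : List ((s : σ.Srt) × ℕ), vs.Nodup ∧
    (∀ x ∈ φ.allVars, x ∈ vs) ∧
    (∀ a ∈ φ.fv, ∀ b ∈ φ.xs, ltv vs a b) ∧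
    (∀ p ∈ φ.inner, ∀ b ∈ φ.xs, ∀ c ∈ p.1, ltv vs b c) ∧
    (∀ p ∈ φ.inner, ∀ a ∈ φ.fv, ∀ c ∈ p.1, ltv vs a c) ∧
    Solved vs φ.base ∧ ∀ p ∈ φ.inner, Solved vs p.2) ∧
  (∀ p ∈ φ.inner, ∀ e ∈ φ.base.eqs, e ∈ (p.2).eqs) ∧
  (∀ p ∈ φ.inner, (∃ e ∈ (p.2).eqs, e ∉ φ.base.eqs) ∨ (∃ u ∈ (p.2).fins, u ∉ φ.base.fins)) ∧
  (∀ u : (s : σ.Srt) × ℕ, ¬ φ.Instantiable u) ∧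
  (∀ x ∈ φ.xs, ∃ v, v ∈ φ.base.vars ∧ v ∉ φ.xs ∧ φ.base.Reach v x) ∧
  (∀ p ∈ φ.inner, ∀ y ∈ p.1, ∃ v, v ∈ (p.2).vars ∧ v ∉ p.1 ∧ (p.2).Reach v y)

end Sig

/-!
If `α` has a solution `ρ₀`, it is rewritten by equivalence-preserving steps, each replacing one
conjunct by finitely many conjuncts of smaller weight, so that the multiset of weights decreases in
the Dershowitz–Manna order. On equations: duplicates and `x = x` are dropped, `x = y` is oriented
downwards, and two equations with the same left-hand side are merged (`x = f(ȳ), x = f(z̄)` becomes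
`x = f(ȳ), ȳ = z̄`; the generators agree because `ρ₀` solves both). On finiteness constraints:
`fin(x)` becomes `fin(ȳ)` if `x = f(ȳ)` and `fin(y)` if `x = y`, and is dropped if the sort of `x`
has no infinite trees; a sort without finite trees cannot occur, since `ρ₀ x` is finite.
-/

section Rewriting

variable {γ β V : Type*}

theorem List.exists_mem_erase_self_of_not_nodup [DecidableEq γ] {l : List γ} (h : ¬ l.Nodup) :
    ∃ a, a ∈ l.erase a := by
  obtain ⟨a, ha⟩ := List.exists_duplicate_iff_not_nodup.2 h
  refine ⟨a, List.count_pos_iff.1 ?_⟩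
  have := List.duplicate_iff_two_le_count.1 ha
  rw [List.count_erase_self]
  omega

theorem List.forall_mem_append_erase_iff [DecidableEq γ] {p : γ → Prop} {l : List γ} {a : γ}
    (ha : a ∈ l) {new : List γ} (hnew : (∀ e ∈ l, p e) → ∀ b ∈ new, p b)
    (hback : (∀ e ∈ new ++ l.erase a, p e) → p a) :
    (∀ e ∈ new ++ l.erase a, p e) ↔ ∀ e ∈ l, p e := by
  refine ⟨fun h e he => ?_, fun h e he => ?_⟩
  · by_cases hea : e = a
    · exact hea ▸ hback h
    · exact h e (List.mem_append_right _ ((List.mem_erase_of_ne hea).2 he))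
  · rcases List.mem_append.1 he with he | he
    · exact hnew h e he
    · exact h e (List.mem_of_mem_erase he)

theorem Multiset.isDershowitzMannaLT_append_erase [DecidableEq γ] [Preorder β] (w : γ → β)
    {l : List γ} {a : γ} (ha : a ∈ l) {new : List γ} (hnew : ∀ b ∈ new, w b < w a) :
    Multiset.IsDershowitzMannaLT (((new ++ l.erase a).map w : List β) : Multiset β)
      ((l.map w : List β) : Multiset β) := by
  refine ⟨(l.erase a).map w, new.map w, {w a}, by simp, by simp [add_comm], ?_, by simpa using hnew⟩
  rw [Multiset.coe_eq_coe.2 ((List.perm_cons_erase ha).map w), List.map_cons,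
    ← Multiset.cons_coe, ← Multiset.singleton_add, add_comm]

def Simplifiable [DecidableEq γ] [LT β] (w : γ → β) (Good : γ → Prop) (models : List γ → Set V)
    (l : List γ) : Prop :=
  ∃ a ∈ l, ∃ new : List γ, (∀ b ∈ new, w b < w a ∧ Good b) ∧
    models (new ++ l.erase a) = models l

theorem exists_normal_of_simplifiable [DecidableEq γ] [Preorder β] [WellFoundedLT β] {w : γ → β}
    {Good : γ → Prop} {models : List γ → Set V} {ρ₀ : V} {Normal : List γ → Prop}
    (hstep : ∀ l, (∀ e ∈ l, Good e) → ρ₀ ∈ models l → ¬ Normal l →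
      Simplifiable w Good models l)
    {l : List γ} (hl : ∀ e ∈ l, Good e) (h₀ : ρ₀ ∈ models l) :
    ∃ l', (∀ e ∈ l', Good e) ∧ Normal l' ∧ models l' = models l := by
  obtain ⟨l', ⟨hgood, hmod⟩, hmin⟩ :=
    (InvImage.wf (fun l : List γ => ((l.map w : List β) : Multiset β))
      Multiset.wellFounded_isDershowitzMannaLT).has_min
      {l' | (∀ e ∈ l', Good e) ∧ models l' = models l} ⟨l, hl, rfl⟩
  refine ⟨l', hgood, by_contra fun hN => ?_, hmod⟩
  obtain ⟨a, ha, new, hnew, hmod'⟩ := hstep l' hgood (hmod ▸ h₀) hN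
  refine hmin (new ++ l'.erase a) ⟨fun b hb => ?_, hmod'.trans hmod⟩
    (Multiset.isDershowitzMannaLT_append_erase w ha fun b hb => (hnew b hb).1)
  rcases List.mem_append.1 hb with hb | hb
  · exact (hnew b hb).2
  · exact hgood b (List.mem_of_mem_erase hb)

end Rewriting

theorem exists_option_spec {ι β : Type*} {H P : ι → Prop} {Q : ι → β → Prop}
    (h : ∀ i, H i → P i → ∃ b, Q i b) :
    ∃ F : ι → Option β, ∀ i, H i → (F i = none ↔ ¬ P i) ∧ ∀ b, F i = some b → Q i b := by
  classical
  refine ⟨fun i => if hi : P i ∧ ∃ b, Q i b then some hi.2.choose else none, fun i hH => ?_⟩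
  dsimp only
  by_cases hP : P i
  · have hi : P i ∧ ∃ b, Q i b := ⟨hP, h i hH hP⟩
    rw [dif_pos hi]
    refine ⟨by simp [hP], fun b hb => ?_⟩
    exact Option.some.inj hb ▸ hi.2.choose_spec
  · simp [hP]

namespace Sig

open Classical

variable {σ : Sig}

theorem Tree.ext {s : σ.Srt} {t t' : σ.Tree s} (h : t.L = t'.L) : t = t' := by
  cases t; cases t'; cases h; rfl

def Tree.nodes {s : σ.Srt} (t : σ.Tree s) : Set (List ℕ) := {p | (t.L p).isSome}

noncomputable def Tree.size {s : σ.Srt} (t : σ.Tree s) : ℕ := t.nodes.ncard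

theorem build_L_cons (g : σ.Gen) (c) (i : Fin (σ.src g).length) (q : List ℕ) :
    (σ.build g c).L (i :: q) = (c i).L q := by
  simp [build]

theorem build_L_cons_of_le (g : σ.Gen) (c) {i : ℕ} (hi : (σ.src g).length ≤ i) (q : List ℕ) :
    (σ.build g c).L (i :: q) = none := by
  simp [build, Nat.not_lt.2 hi]

theorem build_inj {g : σ.Gen} {c c'} : σ.build g c = σ.build g c' ↔ c = c' := by
  refine ⟨fun h => funext fun i => Tree.ext (funext fun q => ?_), congrArg _⟩
  simpa only [build_L_cons] using congrFun (congrArg Tree.L h) (i :: q)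

theorem nodes_build (g : σ.Gen) (c) :
    (σ.build g c).nodes =
      insert [] (⋃ i : Fin (σ.src g).length, List.cons (i : ℕ) '' (c i).nodes) := by
  ext (_ | ⟨j, q⟩)
  · simp [Tree.nodes, build]
  · by_cases hj : j < (σ.src g).length
    · simp only [Tree.nodes, build_L_cons g c ⟨j, hj⟩, Set.mem_ofPred_eq, Set.mem_insert_iff,
        Set.mem_iUnion, Set.mem_image, List.cons.injEq, reduceCtorEq, false_or]
      exact ⟨fun h => ⟨⟨j, hj⟩, q, h, rfl, rfl⟩, by rintro ⟨i, q, h, rfl, rfl⟩; exact h⟩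
    · simp [Tree.nodes, build_L_cons_of_le g c (Nat.not_lt.1 hj)]
      rintro i - rfl
      exact hj i.isLt

theorem isFinite_build_iff (g : σ.Gen) (c) :
    (σ.build g c).IsFinite ↔ ∀ i, (c i).IsFinite := by
  change (σ.build g c).nodes.Finite ↔ ∀ i, (c i).nodes.Finite
  rw [nodes_build, Set.finite_insert]
  refine ⟨fun h i => ?_, fun h => Set.finite_iUnion fun i => (h i).image _⟩
  exact (h.subset (Set.subset_iUnion_of_subset i le_rfl)).of_finite_image
    List.cons_injective.injOn

theorem size_lt_size_build {g : σ.Gen} {c} (hfin : (σ.build g c).IsFinite)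
    (i : Fin (σ.src g).length) : (c i).size < (σ.build g c).size := by
  rw [Tree.size, Tree.size, ← Set.ncard_image_of_injective _ (List.cons_injective (a := (i : ℕ)))]
  refine Set.ncard_lt_ncard ⟨?_, fun h => ?_⟩ hfin
  · rw [nodes_build]
    exact (Set.subset_iUnion (fun i : Fin (σ.src g).length => List.cons (i : ℕ) '' (c i).nodes)
      i).trans (Set.subset_insert _ _)
  · obtain ⟨q, -, hq⟩ := h (by simp [nodes_build] : [] ∈ (σ.build g c).nodes)
    exact List.cons_ne_nil _ _ hq

theorem ltv_or_ltv {A : Type*} {vs : List A} {x y : A} (hx : x ∈ vs) (hne : x ≠ y) :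
    ltv vs x y ∨ ltv vs y x := by
  rcases lt_trichotomy (idx vs x) (idx vs y) with h | h | h
  · exact .inl h
  · exact absurd ((List.idxOf_inj hx).1 h) hne
  · exact .inr h

theorem Tm.eq_var_or_isApp {s : σ.Srt} (t : σ.Tm s) : (∃ m, t = .var s m) ∨ t.IsApp := by
  cases t
  · exact .inl ⟨_, rfl⟩
  · exact .inr trivial

theorem Tm.exists_heq_app_of_root {ρ : σ.Val} {g : σ.Gen} {s : σ.Srt} {t : σ.Tm s}
    (ht : t.IsApp) (hroot : (t.eval ρ).L [] = some g) : ∃ args, HEq t (Tm.app g args) := by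
  cases t with
  | var => exact ht.elim
  | app g' args => cases Option.some.inj hroot; exact ⟨args, .rfl⟩

abbrev SVar (σ : Sig) := (s : σ.Srt) × ℕ

abbrev Eqn (σ : Sig) := (s : σ.Srt) × ℕ × σ.Tm s

def Eqn.lhs (e : σ.Eqn) : σ.SVar := ⟨e.1, e.2.1⟩

def Eqn.Holds (ρ : σ.Val) (e : σ.Eqn) : Prop := ρ e.1 e.2.1 = e.2.2.eval ρ

def Eqn.FlatIn (vs : List σ.SVar) (e : σ.Eqn) : Prop :=
  e.2.2.IsFlat ∧ Eqn.lhs e ∈ vs ∧ ∀ y ∈ e.2.2.fv, y ∈ vs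

theorem Eqn.FlatIn.var_mem {vs : List σ.SVar} {s : σ.Srt} {x m : ℕ}
    (h : Eqn.FlatIn vs ⟨s, x, .var s m⟩) : ⟨s, m⟩ ∈ vs :=
  h.2.2 _ (Set.mem_singleton _)

def eqnModels (l : List σ.Eqn) : Set σ.Val := {ρ | ∀ e ∈ l, Eqn.Holds ρ e}

/-- Every application equation outweighs every variable equation, so decomposing
`x = f(ȳ), x = f(z̄)` into `yᵢ = zᵢ` decreases the weight; within each kind, the steps move
the weighted variable down the order. -/
noncomputable def Eqn.weight (vs : List σ.SVar) : σ.Eqn → ℕ ×ₗ ℕ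
  | ⟨s, _, .var _ m⟩ => toLex (0, idx vs ⟨s, m⟩)
  | ⟨_, x, .app g _⟩ => toLex (1, idx vs ⟨σ.tgt g, x⟩)

def EqnsSolved (vs : List σ.SVar) (l : List σ.Eqn) : Prop :=
  (l.map Eqn.lhs).Nodup ∧
    ∀ e ∈ l, ∀ m, e.2.2 = .var e.1 m → ltv vs ⟨e.1, m⟩ (Eqn.lhs e)

abbrev EqnsSimplifiable (vs : List σ.SVar) : List σ.Eqn → Prop :=
  Simplifiable (Eqn.weight vs) (Eqn.FlatIn vs) eqnModels

theorem Eqn.weight_of_isApp (vs : List σ.SVar) {s : σ.Srt} {x : ℕ} {t : σ.Tm s}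
    (ht : t.IsApp) : Eqn.weight vs ⟨s, x, t⟩ = toLex (1, idx vs ⟨s, x⟩) := by
  cases t with
  | var => exact ht.elim
  | app => rfl

theorem Eqn.holds_app_iff {ρ : σ.Val} {g : σ.Gen} {x : ℕ} {args args'}
    (hb : Eqn.Holds ρ ⟨σ.tgt g, x, .app g args⟩) :
    Eqn.Holds ρ ⟨σ.tgt g, x, .app g args'⟩ ↔ ∀ i, (args i).eval ρ = (args' i).eval ρ := by
  rw [Eqn.Holds, hb]
  exact build_inj.trans funext_iff

section Equations

variable {vs : List σ.SVar} {l : List σ.Eqn}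

theorem eqnsSimplifiable_of_replace {a : σ.Eqn} (ha : a ∈ l) {new : List σ.Eqn}
    (hnew : ∀ b ∈ new, Eqn.weight vs b < Eqn.weight vs a ∧ Eqn.FlatIn vs b)
    (hsound : ∀ ρ, (∀ e ∈ l, Eqn.Holds ρ e) → ∀ b ∈ new, Eqn.Holds ρ b)
    (hback : ∀ ρ, (∀ e ∈ new ++ l.erase a, Eqn.Holds ρ e) → Eqn.Holds ρ a) :
    EqnsSimplifiable vs l :=
  ⟨a, ha, new, hnew, Set.ext fun ρ => List.forall_mem_append_erase_iff ha (hsound ρ) (hback ρ)⟩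

theorem eqnsSimplifiable_of_mem_erase {a : σ.Eqn} (ha : a ∈ l.erase a) :
    EqnsSimplifiable vs l :=
  eqnsSimplifiable_of_replace (List.mem_of_mem_erase ha) (new := []) (by simp) (by simp)
    fun _ h => h a (List.mem_append_right _ ha)

theorem eqnsSimplifiable_of_var_self {s : σ.Srt} {x : ℕ} (ha : ⟨s, x, .var s x⟩ ∈ l) :
    EqnsSimplifiable vs l :=
  eqnsSimplifiable_of_replace ha (new := []) (by simp) (by simp) fun _ _ => rfl

theorem eqnsSimplifiable_of_var_lt {s : σ.Srt} {x m : ℕ} (ha : ⟨s, x, .var s m⟩ ∈ l)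
    (hflat : Eqn.FlatIn vs ⟨s, x, .var s m⟩) (hlt : ltv vs ⟨s, x⟩ ⟨s, m⟩) :
    EqnsSimplifiable vs l := by
  refine eqnsSimplifiable_of_replace ha (new := [⟨s, m, .var s x⟩]) ?_ ?_ ?_
  · simp only [List.mem_singleton, forall_eq]
    exact ⟨Prod.Lex.toLex_lt_toLex.2 (.inr ⟨rfl, hlt⟩), trivial,
      hflat.2.2 _ (Set.mem_singleton _), by rintro _ rfl; exact hflat.2.1⟩
  · intro ρ h b hb
    rw [List.mem_singleton.1 hb]
    exact (h _ ha).symm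
  · intro ρ h
    exact (h ⟨s, m, .var s x⟩ (by simp)).symm

theorem eqnsSimplifiable_of_var_var {s : σ.Srt} {x m m' : ℕ} (hb : ⟨s, x, .var s m⟩ ∈ l)
    (ha : ⟨s, x, .var s m'⟩ ∈ l) (hflatb : Eqn.FlatIn vs ⟨s, x, .var s m⟩)
    (hflata : Eqn.FlatIn vs ⟨s, x, .var s m'⟩) (hlt : ltv vs ⟨s, m⟩ ⟨s, m'⟩) :
    EqnsSimplifiable vs l := by
  have hne : (⟨s, x, .var s m⟩ : σ.Eqn) ≠ ⟨s, x, .var s m'⟩ := by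
    rintro ⟨⟩; exact lt_irrefl _ hlt
  refine eqnsSimplifiable_of_replace ha (new := [⟨s, m', .var s m⟩]) ?_ ?_ ?_
  · simp only [List.mem_singleton, forall_eq]
    exact ⟨Prod.Lex.toLex_lt_toLex.2 (.inr ⟨rfl, hlt⟩), trivial,
      hflata.2.2 _ (Set.mem_singleton _), by rintro _ rfl; exact hflatb.2.2 _ rfl⟩
  · intro ρ h e he
    rw [List.mem_singleton.1 he]
    exact (h _ ha).symm.trans (h _ hb)
  · intro ρ h
    have h₁ : ρ s x = ρ s m := h _ (List.mem_append_right _ ((List.mem_erase_of_ne hne).2 hb))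
    have h₂ : ρ s m' = ρ s m := h ⟨s, m', .var s m⟩ (by simp)
    exact h₁.trans h₂.symm

theorem eqnsSimplifiable_of_var_app {s : σ.Srt} {x m : ℕ} {t : σ.Tm s}
    (hb : ⟨s, x, .var s m⟩ ∈ l) (ha : ⟨s, x, t⟩ ∈ l) (hflatb : Eqn.FlatIn vs ⟨s, x, .var s m⟩)
    (hflata : Eqn.FlatIn vs ⟨s, x, t⟩) (ht : t.IsApp) (hlt : ltv vs ⟨s, m⟩ ⟨s, x⟩) :
    EqnsSimplifiable vs l := by
  have hne : (⟨s, x, .var s m⟩ : σ.Eqn) ≠ ⟨s, x, t⟩ := by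
    rintro ⟨⟩; exact ht
  refine eqnsSimplifiable_of_replace ha (new := [⟨s, m, t⟩]) ?_ ?_ ?_
  · simp only [List.mem_singleton, forall_eq, Eqn.weight_of_isApp vs ht]
    exact ⟨Prod.Lex.toLex_lt_toLex.2 (.inr ⟨rfl, hlt⟩), hflata.1,
      hflatb.2.2 _ (Set.mem_singleton _), hflata.2.2⟩
  · intro ρ h e he
    rw [List.mem_singleton.1 he]
    exact (h _ hb).symm.trans (h _ ha)
  · intro ρ h
    have h₁ : ρ s x = ρ s m := h _ (List.mem_append_right _ ((List.mem_erase_of_ne hne).2 hb))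
    exact h₁.trans (h ⟨s, m, t⟩ (by simp))

theorem eqnsSimplifiable_of_app_app {g : σ.Gen} {x : ℕ} {args args'}
    (hb : ⟨σ.tgt g, x, .app g args⟩ ∈ l) (ha : ⟨σ.tgt g, x, .app g args'⟩ ∈ l)
    (hne : (⟨σ.tgt g, x, .app g args⟩ : σ.Eqn) ≠ ⟨σ.tgt g, x, .app g args'⟩)
    (hflatb : Eqn.FlatIn vs ⟨σ.tgt g, x, .app g args⟩)
    (hflata : Eqn.FlatIn vs ⟨σ.tgt g, x, .app g args'⟩) :
    EqnsSimplifiable vs l := by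
  choose y hy using hflatb.1
  choose y' hy' using hflata.1
  have hsplit : ∀ ρ, Eqn.Holds ρ ⟨σ.tgt g, x, .app g args⟩ →
      (Eqn.Holds ρ ⟨σ.tgt g, x, .app g args'⟩ ↔
        ∀ i, Eqn.Holds ρ ⟨(σ.src g).get i, y i, args' i⟩) := by
    intro ρ hρ
    rw [Eqn.holds_app_iff hρ]
    simp only [hy, Eqn.Holds, Tm.eval]
  refine eqnsSimplifiable_of_replace ha
    (new := List.ofFn fun i => ⟨(σ.src g).get i, y i, args' i⟩) ?_ ?_ ?_
  · simp only [List.forall_mem_ofFn_iff]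
    intro i
    refine ⟨?_, by rw [hy' i]; trivial, ?_, fun z hz => hflata.2.2 z (Set.mem_iUnion.2 ⟨i, hz⟩)⟩
    · rw [hy' i]
      exact Prod.Lex.toLex_lt_toLex.2 (.inl zero_lt_one)
    · exact hflatb.2.2 _ (Set.mem_iUnion.2 ⟨i, by rw [hy i]; rfl⟩)
  · intro ρ h
    exact List.forall_mem_ofFn_iff.2 ((hsplit ρ (h _ hb)).1 (h _ ha))
  · intro ρ h
    have hbρ := h _ (List.mem_append_right _ ((List.mem_erase_of_ne hne).2 hb))
    exact (hsplit ρ hbρ).2 (List.forall_mem_ofFn_iff.1 fun e he => h e (List.mem_append_left _ he))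

theorem eqnsSimplifiable_of_same_lhs (hl : ∀ e ∈ l, Eqn.FlatIn vs e) {ρ₀ : σ.Val}
    (h₀ : ρ₀ ∈ eqnModels l)
    (horient : ∀ e ∈ l, ∀ m, e.2.2 = .var e.1 m → ltv vs ⟨e.1, m⟩ (Eqn.lhs e))
    {e₁ e₂ : σ.Eqn} (h₁ : e₁ ∈ l) (h₂ : e₂ ∈ l) (hne : e₁ ≠ e₂)
    (hlhs : Eqn.lhs e₁ = Eqn.lhs e₂) : EqnsSimplifiable vs l := by
  obtain ⟨s, x, t₁⟩ := e₁
  obtain ⟨s', x', t₂⟩ := e₂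
  obtain ⟨rfl, hx⟩ := Sigma.mk.inj_iff.1 hlhs
  cases eq_of_heq hx
  cases t₁ with
  | var _ m =>
    rcases t₂.eq_var_or_isApp with ⟨m', rfl⟩ | ht₂
    · have hmm' : (⟨s, m⟩ : σ.SVar) ≠ ⟨s, m'⟩ := by rintro ⟨⟩; exact hne rfl
      rcases ltv_or_ltv (Eqn.FlatIn.var_mem (hl _ h₁)) hmm' with hlt | hlt
      · exact eqnsSimplifiable_of_var_var h₁ h₂ (hl _ h₁) (hl _ h₂) hlt
      · exact eqnsSimplifiable_of_var_var h₂ h₁ (hl _ h₂) (hl _ h₁) hlt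
    · exact eqnsSimplifiable_of_var_app h₁ h₂ (hl _ h₁) (hl _ h₂) ht₂ (horient _ h₁ m rfl)
  | app g args =>
    rcases t₂.eq_var_or_isApp with ⟨m', rfl⟩ | ht₂
    · exact eqnsSimplifiable_of_var_app h₂ h₁ (hl _ h₂) (hl _ h₁) trivial (horient _ h₂ m' rfl)
    · have hroot : (t₂.eval ρ₀).L [] = some g := by
        rw [← h₀ _ h₂, h₀ _ h₁]
        rfl
      obtain ⟨args', h⟩ := Tm.exists_heq_app_of_root ht₂ hroot
      cases eq_of_heq h
      exact eqnsSimplifiable_of_app_app h₁ h₂ hne (hl _ h₁) (hl _ h₂)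

theorem eqnsSimplifiable_of_not_oriented (hl : ∀ e ∈ l, Eqn.FlatIn vs e) {e : σ.Eqn}
    (he : e ∈ l) {m : ℕ} (hm : e.2.2 = .var e.1 m) (hnlt : ¬ ltv vs ⟨e.1, m⟩ (Eqn.lhs e)) :
    EqnsSimplifiable vs l := by
  obtain ⟨s, x, t⟩ := e
  dsimp only at hm
  subst hm
  by_cases hmx : m = x
  · subst hmx
    exact eqnsSimplifiable_of_var_self he
  · have hne : (⟨s, x⟩ : σ.SVar) ≠ ⟨s, m⟩ := by rintro ⟨⟩; exact hmx rfl
    exact eqnsSimplifiable_of_var_lt he (hl _ he)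
      ((ltv_or_ltv (hl _ he).2.1 hne).resolve_right hnlt)

theorem eqnsSimplifiable_of_not_solved (hl : ∀ e ∈ l, Eqn.FlatIn vs e) {ρ₀ : σ.Val}
    (h₀ : ρ₀ ∈ eqnModels l) (hns : ¬ EqnsSolved vs l) : EqnsSimplifiable vs l := by
  by_cases horient : ∀ e ∈ l, ∀ m, e.2.2 = .var e.1 m → ltv vs ⟨e.1, m⟩ (Eqn.lhs e)
  · by_cases hnd : l.Nodup
    · have hinj : ¬ ∀ e₁ ∈ l, ∀ e₂ ∈ l, Eqn.lhs e₁ = Eqn.lhs e₂ → e₁ = e₂ :=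
        fun h => hns ⟨hnd.map_on h, horient⟩
      push Not at hinj
      obtain ⟨e₁, h₁, e₂, h₂, hlhs, hne⟩ := hinj
      exact eqnsSimplifiable_of_same_lhs hl h₀ horient h₁ h₂ hne hlhs
    · obtain ⟨a, ha⟩ := List.exists_mem_erase_self_of_not_nodup hnd
      exact eqnsSimplifiable_of_mem_erase ha
  · push Not at horient
    obtain ⟨e, he, m, hm, hnlt⟩ := horient
    exact eqnsSimplifiable_of_not_oriented hl he hm hnlt

theorem exists_eqnsSolved (hl : ∀ e ∈ l, Eqn.FlatIn vs e) {ρ₀ : σ.Val}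
    (h₀ : ρ₀ ∈ eqnModels l) :
    ∃ l', (∀ e ∈ l', Eqn.FlatIn vs e) ∧ EqnsSolved vs l' ∧ eqnModels l' = eqnModels l :=
  exists_normal_of_simplifiable (fun _ hl h₀ hns => eqnsSimplifiable_of_not_solved hl h₀ hns)
    hl h₀

end Equations

def finModels (eqs : List σ.Eqn) (fins : List σ.SVar) : Set σ.Val :=
  {ρ | Basic.Sat ⟨eqs, fins⟩ ρ}

/-- Replacing `fin(x)` for `x = f(ȳ)` by the `fin(yᵢ)` decreases the size of the value under the
reference solution `ρ₀`, which is finite; replacing `fin(x)` for `x = y` with `y < x` keeps the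
value and moves down the order. -/
noncomputable def finWeight (vs : List σ.SVar) (ρ₀ : σ.Val) (u : σ.SVar) : ℕ ×ₗ ℕ :=
  toLex ((ρ₀ u.1 u.2).size, idx vs u)

def FinsNormal (eqs : List σ.Eqn) (fins : List σ.SVar) : Prop :=
  fins.Nodup ∧ (∀ u ∈ fins, ∀ e ∈ eqs, Eqn.lhs e ≠ u) ∧
    ∀ u ∈ fins, (∃ t : σ.Tree u.1, t.IsFinite) ∧ ∃ t : σ.Tree u.1, ¬ t.IsFinite

abbrev FinsSimplifiable (vs : List σ.SVar) (ρ₀ : σ.Val) (eqs : List σ.Eqn) :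
    List σ.SVar → Prop :=
  Simplifiable (finWeight vs ρ₀) (· ∈ vs) (finModels eqs)

section Finiteness

variable {vs : List σ.SVar} {ρ₀ : σ.Val} {eqs : List σ.Eqn} {fins : List σ.SVar}

theorem finsSimplifiable_of_replace {u : σ.SVar} (hu : u ∈ fins) {new : List σ.SVar}
    (hnew : ∀ v ∈ new, finWeight vs ρ₀ v < finWeight vs ρ₀ u ∧ v ∈ vs)
    (hsound : ∀ ρ ∈ eqnModels eqs, (ρ u.1 u.2).IsFinite → ∀ v ∈ new, (ρ v.1 v.2).IsFinite)
    (hback : ∀ ρ ∈ eqnModels eqs, (∀ v ∈ new, (ρ v.1 v.2).IsFinite) → (ρ u.1 u.2).IsFinite) :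
    FinsSimplifiable vs ρ₀ eqs fins :=
  ⟨u, hu, new, hnew, Set.ext fun ρ => and_congr_right fun hρ =>
    List.forall_mem_append_erase_iff hu (fun h => hsound ρ hρ (h u hu))
      (fun h => hback ρ hρ fun v hv => h v (List.mem_append_left _ hv))⟩

theorem finsSimplifiable_of_mem_erase {u : σ.SVar} (hu : u ∈ fins.erase u) :
    FinsSimplifiable vs ρ₀ eqs fins :=
  ⟨u, List.mem_of_mem_erase hu, [], by simp, Set.ext fun _ => and_congr_right fun _ =>
    List.forall_mem_append_erase_iff (List.mem_of_mem_erase hu) (by simp)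
      fun h => h u (List.mem_append_right _ hu)⟩

theorem finsSimplifiable_of_forall_isFinite {u : σ.SVar} (hu : u ∈ fins)
    (hfin : ∀ t : σ.Tree u.1, t.IsFinite) : FinsSimplifiable vs ρ₀ eqs fins :=
  finsSimplifiable_of_replace hu (new := []) (by simp) (by simp) fun ρ _ _ => hfin _

theorem finsSimplifiable_of_var {s : σ.Srt} {x m : ℕ} (hu : ⟨s, x⟩ ∈ fins)
    (he : ⟨s, x, .var s m⟩ ∈ eqs) (hflat : Eqn.FlatIn vs ⟨s, x, .var s m⟩)
    (hlt : ltv vs ⟨s, m⟩ ⟨s, x⟩) (h₀ : ρ₀ ∈ eqnModels eqs) :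
    FinsSimplifiable vs ρ₀ eqs fins := by
  refine finsSimplifiable_of_replace hu (new := [⟨s, m⟩]) ?_ ?_ ?_
  · simp only [List.mem_singleton, forall_eq, finWeight]
    refine ⟨Prod.Lex.toLex_lt_toLex.2 (.inr ⟨?_, hlt⟩), Eqn.FlatIn.var_mem hflat⟩
    rw [show ρ₀ s x = ρ₀ s m from h₀ _ he]
  · intro ρ hρ hx v hv
    rw [List.mem_singleton.1 hv]
    exact (show ρ s x = ρ s m from hρ _ he) ▸ hx
  · intro ρ hρ h
    exact (show ρ s x = ρ s m from hρ _ he) ▸ h ⟨s, m⟩ (by simp)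

theorem finsSimplifiable_of_app {g : σ.Gen} {x : ℕ} {args} (hu : ⟨σ.tgt g, x⟩ ∈ fins)
    (he : ⟨σ.tgt g, x, .app g args⟩ ∈ eqs) (hflat : Eqn.FlatIn vs ⟨σ.tgt g, x, .app g args⟩)
    (h₀ : ρ₀ ∈ finModels eqs fins) : FinsSimplifiable vs ρ₀ eqs fins := by
  choose y hy using hflat.1
  have hval : ∀ ρ ∈ eqnModels eqs,
      ρ (σ.tgt g) x = σ.build g fun i => ρ ((σ.src g).get i) (y i) := by
    intro ρ hρ
    rw [hρ _ he]
    simp only [Tm.eval, hy]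
  have hfin : ∀ ρ ∈ eqnModels eqs, (ρ (σ.tgt g) x).IsFinite ↔
      ∀ i, (ρ ((σ.src g).get i) (y i)).IsFinite := by
    intro ρ hρ
    rw [hval ρ hρ, isFinite_build_iff]
  refine finsSimplifiable_of_replace hu (new := List.ofFn fun i => ⟨(σ.src g).get i, y i⟩)
    ?_ ?_ ?_
  · simp only [List.forall_mem_ofFn_iff, finWeight]
    intro i
    refine ⟨Prod.Lex.toLex_lt_toLex.2 (.inl ?_),
      hflat.2.2 _ (Set.mem_iUnion.2 ⟨i, by rw [hy i]; rfl⟩)⟩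
    rw [hval ρ₀ h₀.1]
    exact size_lt_size_build (hval ρ₀ h₀.1 ▸ h₀.2 _ hu) i
  · intro ρ hρ hx
    exact List.forall_mem_ofFn_iff.2 ((hfin ρ hρ).1 hx)
  · intro ρ hρ h
    exact (hfin ρ hρ).2 (List.forall_mem_ofFn_iff.1 h :)

theorem finsSimplifiable_of_not_normal (hl : ∀ e ∈ eqs, Eqn.FlatIn vs e)
    (hsolved : EqnsSolved vs eqs) (h₀ : ρ₀ ∈ finModels eqs fins)
    (hns : ¬ FinsNormal eqs fins) : FinsSimplifiable vs ρ₀ eqs fins := by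
  by_cases hnd : fins.Nodup
  swap
  · obtain ⟨u, hu⟩ := List.exists_mem_erase_self_of_not_nodup hnd
    exact finsSimplifiable_of_mem_erase hu
  by_cases hlhs : ∃ u ∈ fins, ∃ e ∈ eqs, Eqn.lhs e = u
  · obtain ⟨u, hu, ⟨s, x, t⟩, he, rfl⟩ := hlhs
    cases t with
    | var _ m =>
      exact finsSimplifiable_of_var hu he (hl _ he) (hsolved.2 _ he m rfl) h₀.1
    | app g args => exact finsSimplifiable_of_app hu he (hl _ he) h₀
  · push Not at hlhs
    have hsorts : ¬ ∀ u ∈ fins, (∃ t : σ.Tree u.1, t.IsFinite) ∧ ∃ t : σ.Tree u.1, ¬ t.IsFinite :=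
      fun h => hns ⟨hnd, hlhs, h⟩
    push Not at hsorts
    obtain ⟨u, hu, hsort⟩ := hsorts
    exact finsSimplifiable_of_forall_isFinite hu (hsort ⟨_, h₀.2 u hu⟩)

theorem exists_finsNormal (hl : ∀ e ∈ eqs, Eqn.FlatIn vs e) (hsolved : EqnsSolved vs eqs)
    (hfins : ∀ u ∈ fins, u ∈ vs) (h₀ : ρ₀ ∈ finModels eqs fins) :
    ∃ fins', FinsNormal eqs fins' ∧ finModels eqs fins' = finModels eqs fins := by
  obtain ⟨fins', -, hnormal, hmod⟩ := exists_normal_of_simplifiable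
    (fun _ _ => finsSimplifiable_of_not_normal hl hsolved) hfins h₀
  exact ⟨fins', hnormal, hmod⟩

end Finiteness

theorem Basic.flatIn_of_vars_subset {vs : List σ.SVar} {α : σ.Basic} (hWF : α.WF)
    (hvars : ∀ x ∈ α.vars, x ∈ vs) : ∀ e ∈ α.eqs, Eqn.FlatIn vs e :=
  fun e he => ⟨hWF e he, hvars _ (.inl ⟨e, he, .inl rfl⟩),
    fun y hy => hvars _ (.inl ⟨e, he, .inr hy⟩)⟩

theorem solved_of_eqnsSolved_of_finsNormal {vs : List σ.SVar} {eqs : List σ.Eqn}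
    {fins : List σ.SVar} (heqs : EqnsSolved vs eqs) (hfins : FinsNormal eqs fins) :
    Solved vs ⟨eqs, fins⟩ := by
  refine ⟨List.nodup_append.2 ⟨heqs.1, hfins.1, ?_⟩, heqs.2, hfins.2.2⟩
  rintro _ ha u hu rfl
  obtain ⟨e, he, rfl⟩ := List.mem_map.1 ha
  exact hfins.2.1 _ hu e he rfl

theorem Basic.exists_solved_of_sat {vs : List σ.SVar} {α : σ.Basic} (hWF : α.WF)
    (hvars : ∀ x ∈ α.vars, x ∈ vs) {ρ₀ : σ.Val} (h₀ : α.Sat ρ₀) :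
    ∃ β : σ.Basic, β.WF ∧ Solved vs β ∧ ∀ ρ, α.Sat ρ ↔ β.Sat ρ := by
  obtain ⟨eqs, heqs, hsolved, hmod⟩ := exists_eqnsSolved (flatIn_of_vars_subset hWF hvars) h₀.1
  have hsat : finModels eqs α.fins = {ρ | α.Sat ρ} := by
    ext ρ
    exact and_congr_left fun _ => Set.ext_iff.1 hmod ρ
  obtain ⟨fins, hnormal, hmod'⟩ := exists_finsNormal heqs hsolved
    (fun u hu => hvars u (.inr hu)) (hsat ▸ h₀ : ρ₀ ∈ finModels eqs α.fins)
  refine ⟨⟨eqs, fins⟩, fun e he => (heqs e he).1,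
    solved_of_eqnsSolved_of_finsNormal hsolved hnormal, fun ρ => ?_⟩
  exact (Set.ext_iff.1 (hmod'.trans hsat) ρ).symm

end Sig

/-- solving basic formulae. For every total ordering
`v₀ < ⋯ < vₙ` of variables (given as a duplicate-free list `vs`) and every basic
formula `α` whose variables are among `vs`, either `α` is unsatisfiable in the
structure `𝒯` of trees, or there is a basic formula that is solved with respect
to this ordering and equivalent to `α` in the extended theory of trees.
Moreover, when the signature is finite, such a solved formula (or the answer
"unsatisfiable", represented by `none`) can be computed by a function of `α`. -/
theorem solveBasic_correct (σ : Sig) :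
    (∀ (vs : List ((s : σ.Srt) × ℕ)) (α : σ.Basic),
      vs.Nodup → α.WF → (∀ x ∈ α.vars, x ∈ vs) →
      (¬ ∃ ρ : σ.Val, α.Sat ρ) ∨
      (∃ β : σ.Basic, β.WF ∧ Sig.Solved vs β ∧ ∀ ρ : σ.Val, α.Sat ρ ↔ β.Sat ρ)) ∧
    (Finite σ.Srt → Finite σ.Gen →
      ∃ F : List ((s : σ.Srt) × ℕ) → σ.Basic → Option σ.Basic,
        ∀ (vs : List ((s : σ.Srt) × ℕ)) (α : σ.Basic),
          vs.Nodup → α.WF → (∀ x ∈ α.vars, x ∈ vs) →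
            ((F vs α = none ↔ ¬ ∃ ρ : σ.Val, α.Sat ρ) ∧
             ∀ β : σ.Basic, F vs α = some β →
               β.WF ∧ Sig.Solved vs β ∧ ∀ ρ : σ.Val, α.Sat ρ ↔ β.Sat ρ)) := by
  refine ⟨fun vs α _ hWF hvars => ?_, fun _ _ => ?_⟩
  · refine or_iff_not_imp_left.2 fun hsat => ?_
    obtain ⟨ρ₀, h₀⟩ := not_not.1 hsat
    exact α.exists_solved_of_sat hWF hvars h₀
  · obtain ⟨F, hF⟩ := exists_option_spec
      (H := fun p : List σ.SVar × σ.Basic => p.2.WF ∧ ∀ x ∈ p.2.vars, x ∈ p.1)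
      (P := fun p => ∃ ρ, p.2.Sat ρ)
      (Q := fun p β => β.WF ∧ Sig.Solved p.1 β ∧ ∀ ρ, p.2.Sat ρ ↔ β.Sat ρ)
      fun p hp ⟨_, h₀⟩ => p.2.exists_solved_of_sat hp.1 hp.2 h₀
    exact ⟨fun vs α => F (vs, α), fun vs α _ hWF hvars => hF (vs, α) ⟨hWF, hvars⟩⟩
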